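/- For all x, y ∈ ℂ and all λ ∈ ℂ with Re(λ²) > −1: erfc(−x; y; λ) = erfc(x; −y; λ) + 2·erfc(λy/√(λ²+1)) − 2·erfc(x+y), and erfc(x; y; −λ) = −erfc(x; y; λ) + 2·erfc(x−y), where √(λ²+1) denotes the principal square root. (Reflection formulas for the new smoothing special function.) -/

import Mathlib

open MeasureTheory Set Filter

open scoped Classical

noncomputable section

/-- `e^{iθ}`. -/
def eI (θ : ℝ) : ℂ := Complex.exp (θ * Complex.I)

/-- First hyperterminant ray integral along the ray of direction `e^{iθ}`. -/
def F1ray (θ : ℝ) (z a σ : ℂ) : ℂ :=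
  eI θ * ∫ t in Ioi (0:ℝ),
    Complex.exp (σ * t * eI θ) * (t : ℂ) ^ (a - 1) *
      Complex.exp ((a - 1) * (θ * Complex.I)) * (z - t * eI θ)⁻¹

/-- First hyperterminant `F⁽¹⁾(z;a;σ)` with its principal ray `θ = π - arg σ`. -/
def F1 (z a σ : ℂ) : ℂ := F1ray (Real.pi - σ.arg) z a σ

/-- Second hyperterminant double ray integral, outer ray `e^{iθ₀}`, inner ray `e^{iθ₁}`. -/
def F2ray (θ0 θ1 : ℝ) (z N0 σ0 N1 σ1 : ℂ) : ℂ :=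
  eI θ0 * eI θ1 * ∫ t0 in Ioi (0:ℝ), ∫ t1 in Ioi (0:ℝ),
    Complex.exp (σ0 * t0 * eI θ0 + σ1 * t1 * eI θ1) *
      ((t0 : ℂ) ^ N0 * Complex.exp (N0 * (θ0 * Complex.I))) *
      ((t1 : ℂ) ^ N1 * Complex.exp (N1 * (θ1 * Complex.I))) *
      ((z - t0 * eI θ0) * (t0 * eI θ0 - t1 * eI θ1))⁻¹

/-- Second hyperterminant `F⁽²⁾(z;N₀+1,σ₀;N₁+1,σ₁)` with both principal rays. -/
def F2 (z N0 σ0 N1 σ1 : ℂ) : ℂ :=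
  F2ray (Real.pi - σ0.arg) (Real.pi - σ1.arg) z N0 σ0 N1 σ1

/-- Winding index of the marked argument `ψ` of `σz` relative to the Stokes rays
`ψ = (2m-1)π`. -/
def wind (ψ : ℝ) : ℤ :=
  if 0 ≤ ψ then ⌈(ψ - Real.pi) / (2 * Real.pi)⌉ else -⌈(-ψ - Real.pi) / (2 * Real.pi)⌉

/-- `ψ` lies on a Stokes ray `ψ = (2m-1)π`. -/
def isStokes (ψ : ℝ) : Prop := ∃ m : ℤ, ψ = (2 * m - 1) * Real.pi

/-- Analytic continuation of the first hyperterminant `F⁽¹⁾(z;a;σ)` to the point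
`z = r e^{iφ}` carrying the marked argument `φ`: on `|arg(σz)| < π` it is the
principal ray integral; each upward crossing of a Stokes ray `arg(σz) = (2m-1)π`
adds the residue `2πi e^{σz} |z|^{a-1} e^{i(a-1)·arg z}`; on a Stokes ray it is the
limit from the side of the principal sector. -/
def F1m (a σ : ℂ) (r φ : ℝ) : ℂ :=
  let ψ := σ.arg + φ
  let res : ℂ := 2 * Real.pi * Complex.I * Complex.exp (σ * ((r : ℂ) * eI φ)) *
      (r : ℂ) ^ (a - 1) * Complex.exp ((a - 1) * (φ * Complex.I))
  if isStokes ψ then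
    (if 0 ≤ ψ then limUnder (nhdsWithin φ (Iio φ)) (fun χ => F1 ((r : ℂ) * eI χ) a σ)
     else limUnder (nhdsWithin φ (Ioi φ)) (fun χ => F1 ((r : ℂ) * eI χ) a σ)) + (wind ψ : ℂ) * res
  else F1 ((r : ℂ) * eI φ) a σ + (wind ψ : ℂ) * res

/-- Second hyperterminant extended to `η = arg σ₁ - arg σ₀ ∈ (-π, 0]`:
for `η < 0` one subtracts `2πi F⁽¹⁾`-type term, for `η = 0` it is the limit
`F⁽²⁾(z;N₀+1,σ₀e^{-iε};N₁+1,σ₁)` as `ε → 0⁺`. -/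
def F2ext (z N0 σ0 N1 σ1 : ℂ) : ℂ :=
  if σ0.arg < σ1.arg then F2 z N0 σ0 N1 σ1
  else if σ1.arg = σ0.arg then
    limUnder (nhdsWithin (0:ℝ) (Ioi 0)) (fun ε => F2 z N0 (σ0 * eI (-ε)) N1 σ1)
  else if σ0.arg - σ1.arg < Real.pi then
    F2 z N0 σ0 N1 σ1 -
      2 * Real.pi * Complex.I * F1ray (Real.pi - σ0.arg) z (N0 + N1 + 1) (σ0 + σ1)
  else F2 z N0 σ0 N1 σ1

/-- Second hyperterminant at `z = r e^{iφ}` carrying the marked argument `φ`,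
continued across the Stokes ray `arg(σ₀z) = π` by adding
`2πi e^{σ₀z} |z|^{N₀} e^{iN₀ arg z} F⁽¹⁾(z;N₁+1;σ₁)`, with the value on the ray
taken as the limit from below. -/
def F2m (N0 σ0 N1 σ1 : ℂ) (r φ : ℝ) : ℂ :=
  let ψ := σ0.arg + φ
  if ψ < Real.pi then F2ext ((r : ℂ) * eI φ) N0 σ0 N1 σ1
  else if ψ = Real.pi then
    limUnder (nhdsWithin φ (Iio φ)) (fun χ => F2ext ((r : ℂ) * eI χ) N0 σ0 N1 σ1)
  else
    F2ext ((r : ℂ) * eI φ) N0 σ0 N1 σ1 +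
      2 * Real.pi * Complex.I * Complex.exp (σ0 * ((r : ℂ) * eI φ)) *
        (r : ℂ) ^ N0 * Complex.exp (N0 * (φ * Complex.I)) * F1m (N1 + 1) σ1 r φ

/-- Complementary error function on `ℂ`: `erfc w = (2/√π) ∫₀^∞ e^{-(w+t)²} dt`. -/
def cerfc (w : ℂ) : ℂ :=
  (2 : ℂ) / (Real.sqrt Real.pi : ℂ) * ∫ t in Ioi (0:ℝ), Complex.exp (-(w + t) ^ 2)

/-- Error function `erf w = 1 - erfc w`. -/
def cerf (w : ℂ) : ℂ := 1 - cerfc w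

/-- The new smoothing special function
`erfc(x;y;λ) = (2/√π) ∫₀^∞ e^{-(x+s-y)²} erfc(λ(x+s)) ds`. -/
def cerfc3 (x y lam : ℂ) : ℂ :=
  (2 : ℂ) / (Real.sqrt Real.pi : ℂ) *
    ∫ s in Ioi (0:ℝ), Complex.exp (-(x + s - y) ^ 2) * cerfc (lam * (x + s))

/-- `I(β) = ∫₀^∞ s^{N₁} (1+s)^{-N₀-N₁-1} (s-β)⁻¹ ds`. -/
def Ifun (N0 N1 β : ℂ) : ℂ :=
  ∫ s in Ioi (0:ℝ), (s : ℂ) ^ N1 * ((1 : ℂ) + s) ^ (-N0 - N1 - 1) * ((s : ℂ) - β)⁻¹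

/-- `Ĩ(β)`: equals `I(β)` for `arg β ∈ (0,π]`, the limit of `I(βe^{iθ})` as `θ → 0⁺`
for `β ∈ (0,∞)`, and `I(β) + 2πi β^{N₁}(1+β)^{-N₀-N₁-1}` for `arg β ∈ (-π,0)`. -/
def Itilde (N0 N1 β : ℂ) : ℂ :=
  if 0 < β.arg then Ifun N0 N1 β
  else if β.arg = 0 then limUnder (nhdsWithin (0:ℝ) (Ioi 0)) (fun θ => Ifun N0 N1 (β * eI θ))
  else Ifun N0 N1 β + 2 * Real.pi * Complex.I * β ^ N1 * (1 + β) ^ (-N0 - N1 - 1)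

/-- The sector `|arg(-σz/N)| < 2π` in the logarithmic coordinate `w = log z`
(so `z = e^w` with marked argument `Im w`). -/
def alphaSector (σ N : ℂ) : Set ℂ :=
  {w : ℂ | |σ.arg + w.im - N.arg - Real.pi| < 2 * Real.pi}

/-- The logarithmic coordinate of the centre `z = -N/σ` (marked so that
`arg(-σz/N) = 0`). -/
def wcenter (σ N : ℂ) : ℂ :=
  (Real.log (‖N‖ / ‖σ‖) : ℂ) + (Real.pi + N.arg - σ.arg) * Complex.I

/-- The continuous branch of `log(-σz/N)` vanishing at `z = -N/σ`, in the
logarithmic coordinate `w = log z`. -/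
def ellC (σ N : ℂ) (w : ℂ) : ℂ :=
  w + (Real.log (‖σ‖ / ‖N‖) : ℂ) + (σ.arg - N.arg - Real.pi) * Complex.I

/-- `A` is the function `α_{σ,N}` (in the logarithmic coordinate `w = log z`):
analytic on the sector, `(1/2)α² = 1 + σz/N + ℓ(z)`, `α(-N/σ) = 0` and
`α'(-N/σ) = -iσ/N`, i.e. `dA/dw = i` at the centre. -/
def IsAlpha (σ N : ℂ) (A : ℂ → ℂ) : Prop :=
  DifferentiableOn ℂ A (alphaSector σ N) ∧
  (∀ w ∈ alphaSector σ N, (A w) ^ 2 = 2 * (1 + σ * Complex.exp w / N + ellC σ N w)) ∧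
  A (wcenter σ N) = 0 ∧ HasDerivAt A Complex.I (wcenter σ N)

/-- `g_{σ,N}(z) = i(1+σz/N)⁻¹ - α_{σ,N}(z)⁻¹`, extended by its analytic value
`i/3` at the centre `z = -N/σ`; logarithmic coordinate `w = log z`. -/
def gfun (σ N : ℂ) (A : ℂ → ℂ) (w : ℂ) : ℂ :=
  if w = wcenter σ N then Complex.I / 3
  else Complex.I / (1 + σ * Complex.exp w / N) - (A w)⁻¹

/-- Logarithmic coordinate of the marked point `z = r e^{iφ}`. -/
def wpt (r φ : ℝ) : ℂ := (Real.log r : ℂ) + φ * Complex.I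

/-- Principal square root. -/
def sqrtC (w : ℂ) : ℂ := w ^ ((1 : ℂ) / 2)

/-- Principal branch of the complex arctangent. -/
def arctanC (z : ℂ) : ℂ :=
  Complex.I / 2 * (Complex.log (1 - Complex.I * z) - Complex.log (1 + Complex.I * z))

/-- Logarithmic coordinate of `ζ₁ = -N₁/σ₁` with marked argument
`arg(σ₀ζ₁) = π + arg(σ₀N₁/(σ₁N₀))`. -/
def wzeta (σ0 σ1 N0 N1 : ℂ) : ℂ :=
  (Real.log (‖N1‖ / ‖σ1‖) : ℂ) +
    (Real.pi + (σ0 * N1 / (σ1 * N0)).arg - σ0.arg) * Complex.I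

/-- `d₁ = i α₀(ζ₁)/(1 - σ₀N₁/(σ₁N₀))`, extended by `1` when `σ₀N₁ = σ₁N₀`. -/
def d1c (σ0 σ1 N0 N1 : ℂ) (A0 : ℂ → ℂ) : ℂ :=
  if σ0 * N1 = σ1 * N0 then 1
  else Complex.I * A0 (wzeta σ0 σ1 N0 N1) / (1 - σ0 * N1 / (σ1 * N0))

/-- `G` is the function `γ` of Theorem `hypergeom` for `s* = N₁/N₀`: analytic on
`|arg β| < π` with `(1/2)γ(β)² = (1+1/s*) log((1+s*)/(1+β)) - log(s*/β)`,
`γ(s*) = 0` and `γ(s*e^{iν}) ∼ ν (1+s*)^{-1/2}` as `ν → 0`. -/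
def IsGamma (N0 N1 : ℂ) (G : ℂ → ℂ) : Prop :=
  DifferentiableOn ℂ G {β : ℂ | β ≠ 0 ∧ |β.arg| < Real.pi} ∧
  (∀ β ∈ {β : ℂ | β ≠ 0 ∧ |β.arg| < Real.pi},
    (G β) ^ 2 =
      2 * ((1 + N0 / N1) * Complex.log ((1 + N1 / N0) / (1 + β)) -
        Complex.log (N1 / N0 / β))) ∧
  G (N1 / N0) = 0 ∧
  HasDerivAt G ((1 + N1 / N0) ^ (-(1 : ℂ) / 2) / (Complex.I * (N1 / N0))) (N1 / N0)

/-- `g(0,β) = (1+s*)^{-1/2}(1-β/s*)⁻¹ - i((1+β)γ(β))⁻¹`, with its removable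
singularity at `β = s* = N₁/N₀` filled in. -/
def gzero (N0 N1 : ℂ) (G : ℂ → ℂ) (β : ℂ) : ℂ :=
  if β = N1 / N0 then (1 - N1 / N0) / (3 * (1 + N1 / N0) ^ ((3 : ℂ) / 2))
  else (1 + N1 / N0) ^ (-(1 : ℂ) / 2) * (1 - β / (N1 / N0))⁻¹ -
    Complex.I / ((1 + β) * G β)

/-- The coefficients `bₙ(y,λ)` of the large-`x` asymptotic expansion of
`erfc(x;y;λ)`: `b₀ = b₁ = 0` (`b₋₁ = 0`), `b₂ = 1/(πλ(λ²+1))` and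
`4λ²(λ²+1) b_{m+2} = 4yλ² b_{m+1} - 2((2m-1)(λ²+1) - m) b_m + 2y(m-1) b_{m-1}
- (m-1)(m-2) b_{m-2}` for `m ≥ 1`. -/
def bc (y l : ℂ) : ℕ → ℂ
  | 0 => 0
  | 1 => 0
  | 2 => 1 / (Real.pi * l * (l ^ 2 + 1))
  | 3 =>
      (4 * y * l ^ 2 * bc y l 2 - 2 * ((2 * 1 - 1) * (l ^ 2 + 1) - 1) * bc y l 1 +
          2 * y * (1 - 1 : ℂ) * bc y l 0 - (1 - 1 : ℂ) * (1 - 2 : ℂ) * 0) /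
        (4 * l ^ 2 * (l ^ 2 + 1))
  | (n + 4) =>
      (4 * y * l ^ 2 * bc y l (n + 3) -
          2 * ((2 * ((n : ℂ) + 2) - 1) * (l ^ 2 + 1) - ((n : ℂ) + 2)) * bc y l (n + 2) +
          2 * y * ((n : ℂ) + 1) * bc y l (n + 1) -
          ((n : ℂ) + 1) * (n : ℂ) * bc y l n) /
        (4 * l ^ 2 * (l ^ 2 + 1))

/-- The slit sector `{z ≠ 0 : |arg(σz)| < π}`. -/
def sector1 (σ : ℂ) : Set ℂ := {z : ℂ | z ≠ 0 ∧ |(σ * z).arg| < Real.pi}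

/-- The `erfc(x;y;λ)`-term appearing in the uniform higher-order Stokes smoothing. -/
def X9 (σ0 σ1 N0 N1 : ℂ) (A0 : ℂ → ℂ) (r φ : ℝ) : ℂ :=
  cerfc3 (d1c σ0 σ1 N0 N1 A0 * A0 (wpt r φ) * sqrtC (N1 / 2))
    (d1c σ0 σ1 N0 N1 A0 * A0 (wzeta σ0 σ1 N0 N1) * sqrtC (N1 / 2))
    ((d1c σ0 σ1 N0 N1 A0)⁻¹ * sqrtC (N0 / N1))

/-!
The second identity is linearity of the integral together with `erfc(-w) = 2 - erfc w`.

For the first, both sides are entire in `x` with the same `x`-derivative: `x ↦ ∫₀^∞ f(x + s) ds`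
has derivative `-f x`, and the two contributions combine through `erfc(λx) + erfc(-λx) = 2`.
At `x = -y` the difference collapses to the Gaussian average `∫_ℝ e^{-s²} erfc(λy + λs) ds`,
which equals `√π erfc(λy/√(λ²+1))`: as functions of `p = λy` both have the same derivative
(a full-line Gaussian integral) and both equal `√π` at `p = 0` by the symmetry of `erfc`.
Differentiation under the integral sign is justified by Gaussian decay along horizontal strips,
which Cauchy's estimate passes from a holomorphic function to its derivative; the condition
`Re(λ²) > -1` is exactly what makes `e^{-(w-y)²} erfc(λw)` decay in this sense.
-/

local notation "cexp" => Complex.exp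

lemma neg_mul_sq_add_mul_abs_le {β : ℝ} (hβ : 0 < β) (K a : ℝ) :
    -β * a ^ 2 + K * |a| ≤ K ^ 2 / (2 * β) + -(β / 2) * a ^ 2 := by
  have h := sq_nonneg (β * |a| - K)
  rw [sub_sq, mul_pow, sq_abs] at h
  field_simp
  nlinarith

lemma exp_neg_mul_sq_le_of_abs_sub_le {β u v r : ℝ} (hβ : 0 ≤ β) (h : |u - v| ≤ r) :
    Real.exp (-β * u ^ 2) ≤ Real.exp (β * r ^ 2) * Real.exp (-(β / 2) * v ^ 2) := by
  rw [← Real.exp_add, Real.exp_le_exp]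
  have huv : (u - v) ^ 2 ≤ r ^ 2 := sq_le_sq' (abs_le.1 h).1 (abs_le.1 h).2
  nlinarith [sq_nonneg (u + (u - v)), mul_nonneg hβ (sq_nonneg (u + (u - v)))]

lemma re_quadratic_ge (b c d w : ℂ) :
    b.re * w.re ^ 2 - (2 * ‖b‖ * |w.im| + ‖c‖) * |w.re|
        - (‖b‖ * w.im ^ 2 + ‖c‖ * |w.im| + ‖d‖) ≤ (b * w ^ 2 + c * w + d).re := by
  set v : ℂ := w.im * Complex.I * (2 * w.re + w.im * Complex.I)
  have hsplit : b * w ^ 2 = b * (w.re : ℂ) ^ 2 + b * v := by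
    conv_lhs => rw [← Complex.re_add_im w]
    ring
  have h1 : (b * (w.re : ℂ) ^ 2).re = b.re * w.re ^ 2 := by
    rw [← Complex.ofReal_pow, mul_comm, Complex.re_ofReal_mul, mul_comm]
  have h2 : ‖b * v‖ ≤ ‖b‖ * (2 * |w.im| * |w.re| + w.im ^ 2) := by
    rw [norm_mul, norm_mul]
    gcongr
    calc ‖(w.im : ℂ) * Complex.I‖ * ‖2 * (w.re : ℂ) + w.im * Complex.I‖
        ≤ |w.im| * (2 * |w.re| + |w.im|) := by
          gcongr
          · simp
          · refine (norm_add_le _ _).trans ?_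
            simp
      _ = 2 * |w.im| * |w.re| + w.im ^ 2 := by rw [← sq_abs w.im]; ring
  have h3 : ‖c * w‖ ≤ ‖c‖ * (|w.re| + |w.im|) := by
    rw [norm_mul]
    gcongr
    exact Complex.norm_le_abs_re_add_abs_im w
  have e2 := Complex.abs_re_le_norm (b * v)
  have e3 := Complex.abs_re_le_norm (c * w)
  have e4 := Complex.abs_re_le_norm d
  rw [hsplit, Complex.add_re, Complex.add_re, Complex.add_re, h1]
  rw [abs_le] at e2 e3 e4
  nlinarith [norm_nonneg b, norm_nonneg c, abs_nonneg w.im, abs_nonneg w.re]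

lemma norm_cexp_neg_quadratic_le {b : ℂ} (hb : 0 < b.re) (c d : ℂ) {R : ℝ} {w : ℂ}
    (hw : |w.im| ≤ R) :
    ‖cexp (-(b * w ^ 2 + c * w + d))‖ ≤
      Real.exp ((2 * ‖b‖ * R + ‖c‖) ^ 2 / (2 * b.re) + (‖b‖ * R ^ 2 + ‖c‖ * R + ‖d‖))
        * Real.exp (-(b.re / 2) * w.re ^ 2) := by
  have hK : 2 * ‖b‖ * |w.im| + ‖c‖ ≤ 2 * ‖b‖ * R + ‖c‖ := by gcongr
  have hL : ‖b‖ * w.im ^ 2 + ‖c‖ * |w.im| + ‖d‖ ≤ ‖b‖ * R ^ 2 + ‖c‖ * R + ‖d‖ := by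
    have : w.im ^ 2 ≤ R ^ 2 := by rw [← sq_abs]; gcongr
    gcongr
  rw [Complex.norm_exp, ← Real.exp_add, Real.exp_le_exp, Complex.neg_re]
  have := re_quadratic_ge b c d w
  have := neg_mul_sq_add_mul_abs_le hb (2 * ‖b‖ * R + ‖c‖) w.re
  nlinarith [abs_nonneg w.re]

def HasGaussianDecay (f : ℂ → ℂ) : Prop :=
  ∀ R : ℝ, ∃ C β : ℝ, 0 < β ∧ ∀ w : ℂ, |w.im| ≤ R → ‖f w‖ ≤ C * Real.exp (-β * w.re ^ 2)

namespace HasGaussianDecay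

variable {f g h : ℂ → ℂ}

lemma cexp_neg_quadratic {b : ℂ} (hb : 0 < b.re) (c d : ℂ) :
    HasGaussianDecay fun w => cexp (-(b * w ^ 2 + c * w + d)) :=
  fun _ => ⟨_, b.re / 2, by positivity, fun _ hw => norm_cexp_neg_quadratic_le hb c d hw⟩

lemma of_norm_le_add (hg : HasGaussianDecay g) (hh : HasGaussianDecay h)
    (hf : ∀ w, ‖f w‖ ≤ ‖g w‖ + ‖h w‖) : HasGaussianDecay f := by
  intro R
  obtain ⟨C₁, β₁, hβ₁, hg⟩ := hg R
  obtain ⟨C₂, β₂, hβ₂, hh⟩ := hh R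
  refine ⟨|C₁| + |C₂|, min β₁ β₂, lt_min hβ₁ hβ₂, fun w hw => ?_⟩
  calc ‖f w‖ ≤ C₁ * Real.exp (-β₁ * w.re ^ 2) + C₂ * Real.exp (-β₂ * w.re ^ 2) :=
        (hf w).trans (add_le_add (hg w hw) (hh w hw))
    _ ≤ |C₁| * Real.exp (-min β₁ β₂ * w.re ^ 2) + |C₂| * Real.exp (-min β₁ β₂ * w.re ^ 2) := by
        gcongr
        · exact le_abs_self C₁
        · exact min_le_left _ _
        · exact le_abs_self C₂
        · exact min_le_right _ _
    _ = _ := by ring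

lemma const_mul (hf : HasGaussianDecay f) (a : ℂ) : HasGaussianDecay fun w => a * f w := by
  intro R
  obtain ⟨C, β, hβ, hf⟩ := hf R
  refine ⟨‖a‖ * C, β, hβ, fun w hw => ?_⟩
  rw [norm_mul, mul_assoc]
  exact mul_le_mul_of_nonneg_left (hf w hw) (norm_nonneg a)

lemma exists_bound_of_norm_sub_le (hf : HasGaussianDecay f) (R r : ℝ) :
    ∃ C β : ℝ, 0 < β ∧ ∀ z w : ℂ, |z.im| ≤ R → ‖w - z‖ ≤ r →
      ‖f w‖ ≤ C * Real.exp (-β * z.re ^ 2) := by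
  obtain ⟨C, β, hβ, hf⟩ := hf (R + r)
  refine ⟨|C| * Real.exp (β * r ^ 2), β / 2, by positivity, fun z w hz hw => ?_⟩
  have hre : |w.re - z.re| ≤ r := by
    rw [← Complex.sub_re]; exact (Complex.abs_re_le_norm _).trans hw
  have him : |w.im| ≤ R + r := by
    have : |w.im - z.im| ≤ r := by
      rw [← Complex.sub_im]; exact (Complex.abs_im_le_norm _).trans hw
    linarith [abs_sub_abs_le_abs_sub w.im z.im]
  calc ‖f w‖ ≤ |C| * Real.exp (-β * w.re ^ 2) :=
        (hf w him).trans (mul_le_mul_of_nonneg_right (le_abs_self C) (Real.exp_pos _).le)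
    _ ≤ |C| * (Real.exp (β * r ^ 2) * Real.exp (-(β / 2) * z.re ^ 2)) :=
        mul_le_mul_of_nonneg_left (exp_neg_mul_sq_le_of_abs_sub_le hβ.le hre) (abs_nonneg C)
    _ = _ := by ring

lemma deriv (hd : Differentiable ℂ f) (hf : HasGaussianDecay f) :
    HasGaussianDecay (deriv f) := by
  intro R
  obtain ⟨C, β, hβ, hf⟩ := hf.exists_bound_of_norm_sub_le R 1
  refine ⟨C, β, hβ, fun z hz => ?_⟩
  simpa using Complex.norm_deriv_le_of_forall_mem_sphere_norm_le one_pos hd.diffContOnCl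
    fun w hw => hf z w hz (mem_sphere_iff_norm.1 hw).le

lemma integrable_comp_add (hc : Continuous f) (hf : HasGaussianDecay f) (z : ℂ) :
    Integrable fun t : ℝ => f (z + t) := by
  obtain ⟨C, β, hβ, hf⟩ := hf |z.im|
  refine Integrable.mono' (((integrable_exp_neg_mul_sq hβ).comp_add_left z.re).const_mul C)
    (by fun_prop) (Eventually.of_forall fun t => ?_)
  simpa using hf (z + t) (by simp)

lemma tendsto_comp_add_atTop (hf : HasGaussianDecay f) (z : ℂ) :
    Tendsto (fun t : ℝ => f (z + t)) atTop (nhds 0) := by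
  obtain ⟨C, β, hβ, hf⟩ := hf |z.im|
  have hsq : Tendsto (fun t : ℝ => -β * (z.re + t) ^ 2) atTop atBot :=
    ((tendsto_pow_atTop two_ne_zero).comp
      (tendsto_atTop_add_const_left _ z.re tendsto_id)).const_mul_atTop_of_neg (neg_neg_of_pos hβ)
  have hbound := (Real.tendsto_exp_atBot.comp hsq).const_mul C
  rw [mul_zero] at hbound
  refine squeeze_zero_norm (fun t => ?_) hbound
  simpa using hf (z + t) (by simp)

end HasGaussianDecay

theorem hasDerivAt_integral_Ioi_comp_add {f : ℂ → ℂ} (hd : Differentiable ℂ f)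
    (hf : HasGaussianDecay f) (z : ℂ) :
    HasDerivAt (fun z => ∫ t in Ioi (0:ℝ), f (z + t)) (-f z) z := by
  have hf' := hf.deriv hd
  have hcont' : Continuous (deriv f) := hd.deriv.continuous
  have hdf (w : ℂ) : HasDerivAt f (deriv f w) w := (hd w).hasDerivAt
  obtain ⟨C, β, hβ, hbound⟩ := hf'.exists_bound_of_norm_sub_le |z.im| 1
  obtain ⟨-, hderiv⟩ := hasDerivAt_integral_of_dominated_loc_of_deriv_le
    (μ := volume.restrict (Ioi (0:ℝ))) (F := fun w (t : ℝ) => f (w + t))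
    (F' := fun w (t : ℝ) => deriv f (w + t))
    (bound := fun t => C * Real.exp (-β * (z.re + t) ^ 2))
    (Metric.ball_mem_nhds z one_pos)
    (Eventually.of_forall fun w =>
      (hf.integrable_comp_add hd.continuous w).aestronglyMeasurable.restrict)
    (hf.integrable_comp_add hd.continuous z).integrableOn
    (hf'.integrable_comp_add hcont' z).aestronglyMeasurable.restrict
    (Eventually.of_forall fun t w hw => by
      simpa using hbound (z + t) (w + t) (by simp) (by simpa using (mem_ball_iff_norm.1 hw).le))
    (((integrable_exp_neg_mul_sq hβ).comp_add_left z.re).const_mul C).integrableOn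
    (Eventually.of_forall fun t w _ => (hdf (w + t)).comp_add_const w t)
  have hFTC := integral_Ioi_of_hasDerivAt_of_tendsto' (a := 0) (m := 0)
    (fun t _ => ((hdf (z + t)).comp_const_add z t).comp_ofReal)
    (hf'.integrable_comp_add hcont' z).integrableOn (hf.tendsto_comp_add_atTop z)
  simpa [hFTC] using hderiv

lemma eq_of_hasDerivAt_eq {f g d : ℂ → ℂ} (hf : ∀ z, HasDerivAt f (d z) z)
    (hg : ∀ z, HasDerivAt g (d z) z) {z₀ : ℂ} (h₀ : f z₀ = g z₀) : f = g :=
  eq_of_fderiv_eq (fun z => (hf z).differentiableAt) (fun z => (hg z).differentiableAt)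
    (fun z => by rw [(hf z).hasFDerivAt.fderiv, (hg z).hasFDerivAt.fderiv]) z₀ h₀

local notation "√π" => ((Real.sqrt Real.pi : ℝ) : ℂ)

lemma sqrtPi_ne_zero : √π ≠ 0 := by
  exact_mod_cast (Real.sqrt_pos.2 Real.pi_pos).ne'

lemma pi_div_cpow_half {b : ℂ} (hb : 0 < b.re) :
    ((Real.pi : ℂ) / b) ^ (1 / 2 : ℂ) = √π / b ^ (1 / 2 : ℂ) := by
  have hb0 : b ≠ 0 := fun h => by simp [h] at hb
  have harg : b.arg ≠ Real.pi := fun h => by linarith [(Complex.arg_eq_pi_iff.1 h).1]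
  have hpi : (Real.pi : ℂ) ^ (1 / 2 : ℂ) = √π := by
    rw [Real.sqrt_eq_rpow, Complex.ofReal_cpow Real.pi_pos.le]; norm_num
  rw [div_eq_mul_inv (Real.pi : ℂ) b, div_eq_mul_inv √π, ← hpi, ← Complex.inv_cpow _ _ harg,
    Complex.cpow_def_of_ne_zero (mul_ne_zero (by exact_mod_cast Real.pi_ne_zero) (inv_ne_zero hb0)),
    Complex.cpow_def_of_ne_zero (by exact_mod_cast Real.pi_ne_zero),
    Complex.cpow_def_of_ne_zero (inv_ne_zero hb0), ← Complex.exp_add,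
    ← Complex.ofReal_log Real.pi_pos.le, Complex.log_ofReal_mul Real.pi_pos (inv_ne_zero hb0)]
  ring_nf

lemma integral_cexp_neg_add_sq (w : ℂ) : ∫ t : ℝ, cexp (-(w + t) ^ 2) = √π := by
  have h := integral_cexp_quadratic (b := -1) (by simp) (-2 * w) (-w ^ 2)
  rw [neg_neg, pi_div_cpow_half (by simp), Complex.one_cpow, div_one] at h
  convert h using 2 with t
  · ring_nf
  · rw [show -w ^ 2 - (-2 * w) ^ 2 / (4 * -1) = 0 by ring, Complex.exp_zero, mul_one]

lemma hasGaussianDecay_cexp_neg_sq : HasGaussianDecay fun w => cexp (-w ^ 2) := by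
  simpa using HasGaussianDecay.cexp_neg_quadratic (b := 1) (by simp) 0 0

lemma integrable_cexp_neg_add_sq (w : ℂ) : Integrable fun t : ℝ => cexp (-(w + t) ^ 2) :=
  hasGaussianDecay_cexp_neg_sq.integrable_comp_add (by fun_prop) w

lemma hasDerivAt_cerfc (w : ℂ) : HasDerivAt cerfc (-(2 / √π) * cexp (-w ^ 2)) w := by
  have h := hasDerivAt_integral_Ioi_comp_add (by fun_prop) hasGaussianDecay_cexp_neg_sq w
  exact (h.const_mul (2 / √π)).congr_deriv (by ring)

@[fun_prop]
lemma differentiable_cerfc : Differentiable ℂ cerfc :=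
  fun w => (hasDerivAt_cerfc w).differentiableAt

@[fun_prop]
lemma continuous_cerfc : Continuous cerfc := differentiable_cerfc.continuous

lemma integral_Ioi_add_integral_Ioi_comp_neg {g : ℝ → ℂ} (hg : Integrable g) :
    (∫ t in Ioi (0:ℝ), g t) + ∫ t in Ioi (0:ℝ), g (-t) = ∫ t, g t := by
  rw [integral_comp_neg_Ioi, neg_zero, integral_Iic_eq_integral_Iio, ← compl_Ici,
    ← integral_Ici_eq_integral_Ioi, integral_add_compl measurableSet_Ici hg]

lemma cerfc_add_cerfc_neg (w : ℂ) : cerfc w + cerfc (-w) = 2 := by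
  have h := integral_Ioi_add_integral_Ioi_comp_neg (integrable_cexp_neg_add_sq w)
  have hneg : ∫ t in Ioi (0:ℝ), cexp (-(-w + t) ^ 2) =
      ∫ t in Ioi (0:ℝ), cexp (-(w + ↑(-t)) ^ 2) := by
    congr! 3 with t
    push_cast
    ring
  rw [cerfc, cerfc, hneg, ← mul_add, h, integral_cexp_neg_add_sq,
    div_mul_cancel₀ _ sqrtPi_ne_zero]

lemma cerfc_neg (w : ℂ) : cerfc (-w) = 2 - cerfc w := by
  linear_combination cerfc_add_cerfc_neg w

lemma cerfc_zero : cerfc 0 = 1 := by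
  linear_combination (cerfc_add_cerfc_neg 0 - congrArg cerfc neg_zero) / 2

lemma norm_cerfc_le_of_nonneg_re {z : ℂ} (hz : 0 ≤ z.re) : ‖cerfc z‖ ≤ ‖cexp (-z ^ 2)‖ := by
  have hpt : ∀ t ∈ Ioi (0:ℝ), ‖cexp (-(z + t) ^ 2)‖ ≤ ‖cexp (-z ^ 2)‖ * Real.exp (-1 * t ^ 2) := by
    intro t ht
    rw [Complex.norm_exp, Complex.norm_exp, ← Real.exp_add, Real.exp_le_exp]
    have : (-(z + t) ^ 2).re = (-z ^ 2).re - 2 * t * z.re - t ^ 2 := by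
      simp [sq, Complex.mul_re]; ring
    rw [this]
    nlinarith [mul_nonneg (le_of_lt ht) hz]
  have hint := ((integrable_exp_neg_mul_sq one_pos).const_mul ‖cexp (-z ^ 2)‖).integrableOn
    (s := Ioi (0:ℝ))
  have hnorm : ‖2 / √π‖ = 2 / Real.sqrt Real.pi := by
    rw [norm_div, Complex.norm_real, Real.norm_of_nonneg (Real.sqrt_nonneg _)]; norm_num
  calc ‖cerfc z‖
        ≤ 2 / Real.sqrt Real.pi * ∫ t in Ioi (0:ℝ), ‖cexp (-z ^ 2)‖ * Real.exp (-1 * t ^ 2) := by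
        rw [cerfc, norm_mul, hnorm]
        gcongr
        exact norm_integral_le_of_norm_le hint ((ae_restrict_iff' measurableSet_Ioi).2
          (Eventually.of_forall hpt))
    _ = ‖cexp (-z ^ 2)‖ := by
        rw [integral_const_mul, integral_gaussian_Ioi, div_one]
        field_simp [(Real.sqrt_pos.2 Real.pi_pos).ne']

lemma norm_cerfc_le (z : ℂ) : ‖cerfc z‖ ≤ 2 + ‖cexp (-z ^ 2)‖ := by
  rcases le_or_gt 0 z.re with hz | hz
  · linarith [norm_cerfc_le_of_nonneg_re hz]
  · have h := norm_cerfc_le_of_nonneg_re (z := -z) (by simp; linarith)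
    rw [neg_sq] at h
    rw [← neg_neg z, cerfc_neg, neg_neg]
    exact (norm_sub_le _ _).trans (by simpa using h)

section GaussianAverage

variable {lam : ℂ}

lemma sq_add_one_re_pos (hl : -1 < (lam ^ 2).re) : 0 < (lam ^ 2 + 1).re := by
  simp only [Complex.add_re, Complex.one_re]; linarith

lemma hasGaussianDecay_cexp_mul_cerfc (hl : -1 < (lam ^ 2).re) (a p : ℂ) :
    HasGaussianDecay fun w => cexp (-(w - a) ^ 2) * cerfc (p + lam * w) := by
  refine (HasGaussianDecay.cexp_neg_quadratic (b := 1) (by simp) (-2 * a) (a ^ 2)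
    |>.const_mul 2).of_norm_le_add
    (HasGaussianDecay.cexp_neg_quadratic (sq_add_one_re_pos hl) (2 * lam * p - 2 * a)
      (a ^ 2 + p ^ 2)) fun w => ?_
  have e1 : -(1 * w ^ 2 + -2 * a * w + a ^ 2) = -(w - a) ^ 2 := by ring
  have e2 : cexp (-((lam ^ 2 + 1) * w ^ 2 + (2 * lam * p - 2 * a) * w + (a ^ 2 + p ^ 2))) =
      cexp (-(w - a) ^ 2) * cexp (-(p + lam * w) ^ 2) := by
    rw [← Complex.exp_add]; ring_nf
  rw [e1, e2, norm_mul, norm_mul, norm_mul, Complex.norm_two]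
  nlinarith [norm_cerfc_le (p + lam * w), norm_nonneg (cexp (-(w - a) ^ 2))]

lemma sqrtC_sq_add_one (hl : -1 < (lam ^ 2).re) :
    sqrtC (lam ^ 2 + 1) ^ 2 = lam ^ 2 + 1 ∧ sqrtC (lam ^ 2 + 1) ≠ 0 := by
  have hsq : sqrtC (lam ^ 2 + 1) ^ 2 = lam ^ 2 + 1 := by
    rw [sqrtC, ← Complex.cpow_nat_mul]; norm_num
  refine ⟨hsq, fun h => ?_⟩
  have := sq_add_one_re_pos hl
  rw [← hsq, h] at this
  simp at this

lemma integrable_cexp_neg_sq_mul_cerfc (hl : -1 < (lam ^ 2).re) (p : ℂ) :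
    Integrable fun s : ℝ => cexp (-(s : ℂ) ^ 2) * cerfc (p + lam * s) := by
  simpa using (hasGaussianDecay_cexp_mul_cerfc hl 0 p).integrable_comp_add (by fun_prop) 0

lemma hasDerivAt_integral_cexp_neg_sq_mul_cerfc (hl : -1 < (lam ^ 2).re) (p : ℂ) :
    HasDerivAt (fun p => ∫ s : ℝ, cexp (-(s : ℂ) ^ 2) * cerfc (p + lam * s))
      (∫ s : ℝ, cexp (-(s : ℂ) ^ 2) * (-(2 / √π) * cexp (-(p + lam * s) ^ 2))) p := by
  have hb := sq_add_one_re_pos hl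
  set P := ‖p‖ + 1
  have hquad (q : ℂ) (s : ℝ) : cexp (-(s : ℂ) ^ 2) * (-(2 / √π) * cexp (-(q + lam * s) ^ 2)) =
      -(2 / √π) * cexp (-((lam ^ 2 + 1) * s ^ 2 + 2 * lam * q * s + q ^ 2)) := by
    rw [mul_left_comm, ← Complex.exp_add]; ring_nf
  refine (hasDerivAt_integral_of_dominated_loc_of_deriv_le
    (F := fun q (s : ℝ) => cexp (-(s : ℂ) ^ 2) * cerfc (q + lam * s))
    (F' := fun q (s : ℝ) => cexp (-(s : ℂ) ^ 2) * (-(2 / √π) * cexp (-(q + lam * s) ^ 2)))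
    (bound := fun s => ‖2 / √π‖ * Real.exp ((2 * ‖lam‖ * P) ^ 2 / (2 * (lam ^ 2 + 1).re) + P ^ 2)
      * Real.exp (-((lam ^ 2 + 1).re / 2) * s ^ 2))
    (Metric.ball_mem_nhds p one_pos)
    (Eventually.of_forall fun q => (integrable_cexp_neg_sq_mul_cerfc hl q).aestronglyMeasurable)
    (integrable_cexp_neg_sq_mul_cerfc hl p)
    (by fun_prop)
    (Eventually.of_forall fun s q hq => by
      have hqP : ‖q‖ ≤ P := by
        have := mem_ball_iff_norm.1 hq
        linarith [norm_le_norm_add_norm_sub' q p, norm_sub_rev q p]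
      have h := norm_cexp_neg_quadratic_le hb (2 * lam * q) (q ^ 2) (R := 0) (w := s) (by simp)
      simp only [mul_zero, zero_add, ne_eq, OfNat.ofNat_ne_zero, not_false_eq_true, zero_pow,
        add_zero, Complex.ofReal_re] at h
      rw [hquad, norm_mul, norm_neg, mul_assoc _ (Real.exp _)]
      refine mul_le_mul_of_nonneg_left (h.trans ?_) (norm_nonneg (2 / √π))
      gcongr
      · rw [norm_mul, norm_mul, Complex.norm_two]; gcongr
      · rw [norm_pow]; gcongr)
    ((integrable_exp_neg_mul_sq (by linarith)).const_mul _)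
    (Eventually.of_forall fun s q _ =>
      (((hasDerivAt_cerfc (q + lam * s)).comp_add_const q (lam * s)).const_mul _))).2

theorem integral_cexp_neg_sq_mul_cerfc (hl : -1 < (lam ^ 2).re) (p : ℂ) :
    ∫ s : ℝ, cexp (-(s : ℂ) ^ 2) * cerfc (p + lam * s) =
      √π * cerfc (p / sqrtC (lam ^ 2 + 1)) := by
  obtain ⟨hμ2, hμ⟩ := sqrtC_sq_add_one hl
  set μ := sqrtC (lam ^ 2 + 1)
  have hb := sq_add_one_re_pos hl
  have hb0 : lam ^ 2 + 1 ≠ 0 := fun h => by simp [h] at hb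
  have hderiv (q : ℂ) : ∫ s : ℝ, cexp (-(s : ℂ) ^ 2) * (-(2 / √π) * cexp (-(q + lam * s) ^ 2)) =
      √π * (-(2 / √π) * cexp (-(q / μ) ^ 2) * (1 / μ)) := by
    have h := integral_cexp_quadratic (b := -(lam ^ 2 + 1)) (by rw [Complex.neg_re]; linarith)
      (-2 * lam * q) (-q ^ 2)
    rw [neg_neg, pi_div_cpow_half hb] at h
    have hexp : -q ^ 2 - (-2 * lam * q) ^ 2 / (4 * -(lam ^ 2 + 1)) = -(q / μ) ^ 2 := by
      rw [div_pow, hμ2]; field_simp; ring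
    calc _ = -(2 / √π) * ∫ s : ℝ, cexp (-(lam ^ 2 + 1) * s ^ 2 + -2 * lam * q * s + -q ^ 2) := by
          rw [← integral_const_mul]
          congr with s
          rw [mul_left_comm, ← Complex.exp_add]
          ring_nf
      _ = _ := by
          rw [h, hexp, show (lam ^ 2 + 1) ^ (1 / 2 : ℂ) = μ from rfl]
          field_simp [sqrtPi_ne_zero]
  refine congrFun (eq_of_hasDerivAt_eq (z₀ := 0)
    (fun q => hderiv q ▸ hasDerivAt_integral_cexp_neg_sq_mul_cerfc hl q)
    (fun q => ((hasDerivAt_cerfc (q / μ)).comp q ((hasDerivAt_id q).div_const μ)).const_mul √π)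
    ?_) p
  set g : ℝ → ℂ := fun s => cexp (-(s : ℂ) ^ 2) * cerfc (lam * s)
  have hint : Integrable g := by simpa using integrable_cexp_neg_sq_mul_cerfc hl 0
  have hsum : (fun s => g s + g (-s)) = fun s : ℝ => 2 * cexp (-(0 + (s : ℂ)) ^ 2) := by
    ext s
    simp only [g, Complex.ofReal_neg, mul_neg, cerfc_neg, neg_sq, zero_add]
    ring
  have h := integral_add hint hint.comp_neg
  rw [hsum, integral_const_mul, integral_cexp_neg_add_sq, integral_neg_eq_self] at h
  show ∫ s : ℝ, cexp (-(s : ℂ) ^ 2) * cerfc (0 + lam * s) = √π * cerfc (0 / μ)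
  simp only [zero_add, zero_div, cerfc_zero, mul_one]
  linear_combination -h / 2

end GaussianAverage

section Cerfc3

variable {lam : ℂ}

lemma hasGaussianDecay_cerfc3_integrand (hl : -1 < (lam ^ 2).re) (y : ℂ) :
    HasGaussianDecay fun w => cexp (-(w - y) ^ 2) * cerfc (lam * w) := by
  simpa using hasGaussianDecay_cexp_mul_cerfc hl y 0

lemma integrableOn_cerfc3_integrand (hl : -1 < (lam ^ 2).re) (x y : ℂ) :
    IntegrableOn (fun s : ℝ => cexp (-(x + s - y) ^ 2) * cerfc (lam * (x + s))) (Ioi 0) :=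
  ((hasGaussianDecay_cerfc3_integrand hl y).integrable_comp_add (by fun_prop) x).integrableOn

lemma hasDerivAt_cerfc3 (hl : -1 < (lam ^ 2).re) (x y : ℂ) :
    HasDerivAt (fun x => cerfc3 x y lam)
      (-(2 / √π) * (cexp (-(x - y) ^ 2) * cerfc (lam * x))) x := by
  have h := hasDerivAt_integral_Ioi_comp_add (by fun_prop)
    (hasGaussianDecay_cerfc3_integrand hl y) x
  exact (h.const_mul (2 / √π)).congr_deriv (by ring)

lemma cerfc3_self_sub_cerfc3_neg_self (hl : -1 < (lam ^ 2).re) (y : ℂ) :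
    cerfc3 y y lam - cerfc3 (-y) (-y) lam = 2 * cerfc (lam * y / sqrtC (lam ^ 2 + 1)) - 2 := by
  set k : ℝ → ℂ := fun s => cexp (-(s : ℂ) ^ 2) * cerfc (lam * y + lam * s)
  have hk := integrable_cexp_neg_sq_mul_cerfc hl (lam * y)
  have hsplit := integral_Ioi_add_integral_Ioi_comp_neg hk
  rw [integral_cexp_neg_sq_mul_cerfc hl] at hsplit
  have hgauss : IntegrableOn (fun s : ℝ => 2 * cexp (-(0 + s : ℂ) ^ 2)) (Ioi 0) :=
    ((integrable_cexp_neg_add_sq 0).const_mul 2).integrableOn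
  have h₁ : cerfc3 y y lam = 2 / √π * ∫ s in Ioi (0:ℝ), k s := by
    simp only [cerfc3, k, add_sub_cancel_left, mul_add]
  have h₂ : cerfc3 (-y) (-y) lam =
      2 / √π * ∫ s in Ioi (0:ℝ), (2 * cexp (-(0 + s : ℂ) ^ 2) - k (-s)) := by
    rw [cerfc3]
    congr 1
    refine setIntegral_congr_fun measurableSet_Ioi fun s _ => ?_
    rw [show lam * (-y + s) = -(lam * y + lam * ↑(-s)) by push_cast; ring, cerfc_neg]
    simp only [k, Complex.ofReal_neg, neg_sq]
    ring_nf
  rw [integral_sub hgauss hk.comp_neg.integrableOn, integral_const_mul] at h₂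
  have h₀ := cerfc_zero
  rw [cerfc] at h₀
  rw [h₁, h₂]
  linear_combination (2 / √π) * hsplit - 2 * h₀ +
    2 * cerfc (lam * y / sqrtC (lam ^ 2 + 1)) * mul_inv_cancel₀ sqrtPi_ne_zero

theorem cerfc3_neg_left (hl : -1 < (lam ^ 2).re) (x y : ℂ) :
    cerfc3 (-x) y lam =
      cerfc3 x (-y) lam + 2 * cerfc (lam * y / sqrtC (lam ^ 2 + 1)) - 2 * cerfc (x + y) := by
  have hf (x : ℂ) : HasDerivAt (fun x => cerfc3 (-x) y lam - cerfc3 x (-y) lam)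
      (4 / √π * cexp (-(x + y) ^ 2)) x := by
    have h := ((hasDerivAt_cerfc3 hl (-x) y).comp x (hasDerivAt_neg x)).sub
      (hasDerivAt_cerfc3 hl x (-y))
    refine h.congr_deriv ?_
    rw [show lam * -x = -(lam * x) by ring, cerfc_neg]
    ring_nf
  have hg (x : ℂ) : HasDerivAt
      (fun x => 2 * cerfc (lam * y / sqrtC (lam ^ 2 + 1)) - 2 * cerfc (x + y))
      (4 / √π * cexp (-(x + y) ^ 2)) x := by
    have h := (((hasDerivAt_cerfc (x + y)).comp_add_const x y).const_mul 2).const_sub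
      (2 * cerfc (lam * y / sqrtC (lam ^ 2 + 1)))
    exact h.congr_deriv (by ring)
  have h := congrFun (eq_of_hasDerivAt_eq hf hg (z₀ := -y) (by
    simpa [cerfc_zero] using cerfc3_self_sub_cerfc3_neg_self hl y)) x
  linear_combination h

theorem cerfc3_neg_lam (hl : -1 < (lam ^ 2).re) (x y : ℂ) :
    cerfc3 x y (-lam) = -cerfc3 x y lam + 2 * cerfc (x - y) := by
  have h : ∫ s in Ioi (0:ℝ), cexp (-(x + s - y) ^ 2) * cerfc (-lam * (x + s)) =
      ∫ s in Ioi (0:ℝ), (2 * cexp (-((x - y) + s) ^ 2) -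
        cexp (-(x + s - y) ^ 2) * cerfc (lam * (x + s))) := by
    refine setIntegral_congr_fun measurableSet_Ioi fun s _ => ?_
    rw [neg_mul, cerfc_neg]
    ring_nf
  rw [cerfc3, cerfc3, cerfc, h,
    integral_sub ((integrable_cexp_neg_add_sq _).const_mul 2).integrableOn
      (integrableOn_cerfc3_integrand hl x y), integral_const_mul]
  ring

end Cerfc3

theorem stmt17 (x y lam : ℂ) (hl : -1 < (lam ^ 2).re) :
    (cerfc3 (-x) y lam =
      cerfc3 x (-y) lam + 2 * cerfc (lam * y / sqrtC (lam ^ 2 + 1)) -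
        2 * cerfc (x + y)) ∧
    cerfc3 x y (-lam) = -cerfc3 x y lam + 2 * cerfc (x - y) :=
  ⟨cerfc3_neg_left hl x y, cerfc3_neg_lam hl x y⟩
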